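/- Let ι = erf⁻¹. The elasticity ρ ↦ ρ·ι'(ρ)/ι(ρ) is strictly increasing on (0,1). -/

import Mathlib

/-- The Gaussian error function `erf z = (2/√π) ∫₀^z e^{-t²} dt`. -/
noncomputable def erf (z : ℝ) : ℝ :=
  (2 / Real.sqrt Real.pi) * ∫ t in (0:ℝ)..z, Real.exp (-t ^ 2)

/-- The inverse of the Gaussian error function. -/
noncomputable def erfInv : ℝ → ℝ := Function.invFun erf

/-! With `x = erfInv ρ`, the inverse function rule turns the elasticity into `(√π / 2) · B x / x`
where `B x = e^{x²} erf x`. Since `B' = 2/√π + 2x B` is strictly increasing on `[0, ∞)`, `B` is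
strictly convex there, and as `B 0 = 0` its secant slope `B x / x` from the origin is strictly
increasing; composing with the increasing `erfInv` gives the claim. -/

open Real Set Filter Topology

lemma hasDerivAt_erf (x : ℝ) : HasDerivAt erf (2 / √π * exp (-x ^ 2)) x := by
  have hc : Continuous fun t : ℝ => exp (-t ^ 2) := by fun_prop
  exact (intervalIntegral.integral_hasDerivAt_right (hc.intervalIntegrable _ _)
    (hc.stronglyMeasurableAtFilter _ _) hc.continuousAt).const_mul _

lemma continuous_erf : Continuous erf :=
  continuous_iff_continuousAt.2 fun x => (hasDerivAt_erf x).continuousAt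

lemma strictMono_erf : StrictMono erf :=
  strictMono_of_deriv_pos fun x => by rw [(hasDerivAt_erf x).deriv]; positivity

@[simp]
lemma erf_zero : erf 0 = 0 := by simp [erf]

lemma erf_neg (x : ℝ) : erf (-x) = -erf x := by
  have h := intervalIntegral.integral_comp_neg (a := 0) (b := -x) fun t : ℝ => exp (-t ^ 2)
  simp only [neg_sq, neg_neg, neg_zero] at h
  rw [erf, erf, h, intervalIntegral.integral_symm, mul_neg]

lemma tendsto_erf_atTop : Tendsto erf atTop (𝓝 1) := by
  have hI : MeasureTheory.IntegrableOn (fun t : ℝ => exp (-t ^ 2)) (Ioi 0) := by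
    simpa using (integrable_exp_neg_mul_sq one_pos).integrableOn (s := Ioi 0)
  have h := (MeasureTheory.intervalIntegral_tendsto_integral_Ioi 0 hI tendsto_id).const_mul
    (2 / √π)
  have hval : 2 / √π * ∫ t in Ioi (0:ℝ), exp (-t ^ 2) = 1 := by
    have hgauss := integral_gaussian_Ioi 1
    simp only [neg_mul, one_mul, div_one] at hgauss
    rw [hgauss]
    field_simp
  rwa [hval] at h

lemma tendsto_erf_atBot : Tendsto erf atBot (𝓝 (-1)) := by
  have h := (tendsto_erf_atTop.comp tendsto_neg_atBot_atTop).neg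
  simpa [Function.comp_def, erf_neg] using h

lemma range_erf : range erf = Ioo (-1) 1 := by
  ext ρ
  constructor
  · rintro ⟨x, rfl⟩
    exact ⟨(strictMono_erf.monotone.le_of_tendsto tendsto_erf_atBot (x - 1)).trans_lt
        (strictMono_erf (sub_one_lt x)),
      (strictMono_erf (lt_add_one x)).trans_le
        (strictMono_erf.monotone.ge_of_tendsto tendsto_erf_atTop (x + 1))⟩
  · rintro ⟨hlo, hhi⟩
    exact mem_range_of_exists_le_of_exists_ge continuous_erf
      ((tendsto_erf_atBot.eventually (eventually_le_nhds hlo)).exists)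
      ((tendsto_erf_atTop.eventually (eventually_ge_nhds hhi)).exists)

lemma erfInv_erf (x : ℝ) : erfInv (erf x) = x :=
  Function.leftInverse_invFun strictMono_erf.injective x

@[simp]
lemma erfInv_zero : erfInv 0 = 0 := by simpa using erfInv_erf 0

lemma erf_erfInv {ρ : ℝ} (hρ : ρ ∈ Ioo (-1) 1) : erf (erfInv ρ) = ρ :=
  Function.invFun_eq (show ρ ∈ range erf from range_erf ▸ hρ)

lemma strictMonoOn_erfInv : StrictMonoOn erfInv (Ioo (-1) 1) := fun a ha b hb hab => by
  rwa [← strictMono_erf.lt_iff_lt, erf_erfInv ha, erf_erfInv hb]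

lemma erfInv_pos {ρ : ℝ} (hρ : ρ ∈ Ioo 0 1) : 0 < erfInv ρ := by
  simpa using strictMonoOn_erfInv (by norm_num) ⟨by linarith [hρ.1], hρ.2⟩ hρ.1

lemma image_erfInv : erfInv '' Ioo (-1) 1 = univ :=
  eq_univ_of_forall fun x => ⟨erf x, range_erf ▸ mem_range_self x, erfInv_erf x⟩

lemma hasDerivAt_erfInv {ρ : ℝ} (hρ : ρ ∈ Ioo (-1) 1) :
    HasDerivAt erfInv (√π / 2 * exp (erfInv ρ ^ 2)) ρ := by
  have hcont : ContinuousAt erfInv ρ :=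
    strictMonoOn_erfInv.continuousAt_of_image_mem_nhds (isOpen_Ioo.mem_nhds hρ)
      (by simp [image_erfInv])
  have hinv : ∀ᶠ y in 𝓝 ρ, erf (erfInv y) = y :=
    eventually_of_mem (isOpen_Ioo.mem_nhds hρ) fun y hy => erf_erfInv hy
  have hderiv := HasDerivAt.of_local_left_inverse hcont (hasDerivAt_erf _) (by positivity) hinv
  refine hderiv.congr_deriv ?_
  rw [mul_inv, inv_div, ← exp_neg, neg_neg]

lemma erfInv_elasticity_eq {ρ : ℝ} (hρ : ρ ∈ Ioo (-1) 1) :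
    ρ * deriv erfInv ρ / erfInv ρ =
      √π / 2 * (exp (erfInv ρ ^ 2) * erf (erfInv ρ) / erfInv ρ) := by
  rw [(hasDerivAt_erfInv hρ).deriv, erf_erfInv hρ]
  ring

lemma StrictConvexOn.strictMonoOn_div_of_map_zero {f : ℝ → ℝ}
    (hf : StrictConvexOn ℝ (Ici 0) f) (h0 : f 0 = 0) :
    StrictMonoOn (fun x => f x / x) (Ioi 0) := fun x hx y hy hxy => by
  simpa [h0] using hf.secant_strict_mono self_mem_Ici (mem_Ici_of_Ioi hx) (mem_Ici_of_Ioi hy)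
    (ne_of_gt hx) (ne_of_gt hy) hxy

lemma hasDerivAt_exp_sq_mul_erf (x : ℝ) :
    HasDerivAt (fun x => exp (x ^ 2) * erf x) (2 / √π + 2 * x * (exp (x ^ 2) * erf x)) x := by
  have hsq : HasDerivAt (fun x : ℝ => x ^ 2) (2 * x) x := by simpa using hasDerivAt_pow 2 x
  refine (hsq.exp.mul (hasDerivAt_erf x)).congr_deriv ?_
  have hexp : exp (x ^ 2) * exp (-x ^ 2) = 1 := by rw [← exp_add, add_neg_cancel, exp_zero]
  linear_combination (2 / √π) * hexp

lemma strictMonoOn_exp_sq_mul_erf : StrictMonoOn (fun x => exp (x ^ 2) * erf x) (Ici 0) :=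
  fun a ha b _ hab => by
  have hsq : a ^ 2 < b ^ 2 := pow_lt_pow_left₀ hab ha two_ne_zero
  exact mul_lt_mul'' (exp_lt_exp.2 hsq) (strictMono_erf hab) (exp_pos _).le
    (by simpa using strictMono_erf.monotone ha)

lemma strictConvexOn_exp_sq_mul_erf :
    StrictConvexOn ℝ (Ici 0) (fun x => exp (x ^ 2) * erf x) := by
  apply StrictMonoOn.strictConvexOn_of_deriv (convex_Ici 0)
    (fun x _ => (hasDerivAt_exp_sq_mul_erf x).continuousAt.continuousWithinAt)
  rw [interior_Ici]
  intro a ha b hb hab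
  simp only [(hasDerivAt_exp_sq_mul_erf _).deriv]
  have hB := strictMonoOn_exp_sq_mul_erf (mem_Ici_of_Ioi ha) (mem_Ici_of_Ioi hb) hab
  have hBa : 0 < exp (a ^ 2) * erf a := by
    simpa using strictMonoOn_exp_sq_mul_erf self_mem_Ici (mem_Ici_of_Ioi ha) ha
  nlinarith [mem_Ioi.1 ha]

/-- The elasticity  of the inverse error function is strictly increasing
on . -/
theorem erfInv_elasticity_strictMono :
    StrictMonoOn (fun ρ => ρ * deriv erfInv ρ / erfInv ρ) (Set.Ioo (0:ℝ) 1) := by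
  have hslope := strictConvexOn_exp_sq_mul_erf.strictMonoOn_div_of_map_zero (by simp)
  have hsub : Ioo (0:ℝ) 1 ⊆ Ioo (-1) 1 := Ioo_subset_Ioo_left (by norm_num)
  intro a ha b hb hab
  simp only [erfInv_elasticity_eq (hsub ha), erfInv_elasticity_eq (hsub hb)]
  have hx := strictMonoOn_erfInv (hsub ha) (hsub hb) hab
  exact mul_lt_mul_of_pos_left (hslope (erfInv_pos ha) (erfInv_pos hb) hx) (by positivity)
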